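/- arXiv:1010.4522 — 2 statements merged into one kernel-verified Lean document; each statement's English description precedes it below -/
import Mathlib

section
/- Let (E,‖·‖) be a random normed module over ℂ with base (Ω,𝓕,P) having the countable concatenation property, and suppose g ∈ E* satisfies: there exist A ∈ 𝓕 with P(A) > 0 and δ > 0 such that ‖g‖* > 1 + δ a.e. on A. Then there exists x ∈ E with ‖x‖ ≤ (1 + δ/2)·Ĩ_A and g(x) = Ĩ_A · ‖g‖*. -/
open MeasureTheory

noncomputable instance AEEqFun.instCommRing' {α γ : Type*} [MeasurableSpace α] {μ : Measure α}
    [TopologicalSpace γ] [CommRing γ] [IsTopologicalRing γ] : CommRing (α →ₘ[μ] γ) :=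
  { (inferInstance : AddCommGroup (α →ₘ[μ] γ)),
    (inferInstance : CommMonoid (α →ₘ[μ] γ)) with
    left_distrib := fun f g h => by
      apply AEEqFun.ext
      filter_upwards [AEEqFun.coeFn_mul f (g + h), AEEqFun.coeFn_add g h,
        AEEqFun.coeFn_mul f g, AEEqFun.coeFn_mul f h,
        AEEqFun.coeFn_add (f * g) (f * h)] with a h1 h2 h3 h4 h5
      simp only [Pi.mul_apply, Pi.add_apply] at *
      rw [h1, h2, h5, h3, h4, mul_add]
    right_distrib := fun f g h => by
      apply AEEqFun.ext
      filter_upwards [AEEqFun.coeFn_mul (f + g) h, AEEqFun.coeFn_add f g,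
        AEEqFun.coeFn_mul f h, AEEqFun.coeFn_mul g h,
        AEEqFun.coeFn_add (f * h) (g * h)] with a h1 h2 h3 h4 h5
      simp only [Pi.mul_apply, Pi.add_apply] at *
      rw [h1, h2, h5, h3, h4, add_mul]
    zero_mul := fun f => by
      apply AEEqFun.ext
      filter_upwards [AEEqFun.coeFn_mul 0 f, AEEqFun.coeFn_zero (α := α) (μ := μ) (β := γ)]
        with a h1 h2
      simp only [Pi.mul_apply] at *
      rw [h1, h2]
      simp
    mul_zero := fun f => by
      apply AEEqFun.ext
      filter_upwards [AEEqFun.coeFn_mul f 0, AEEqFun.coeFn_zero (α := α) (μ := μ) (β := γ)]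
        with a h1 h2
      simp only [Pi.mul_apply] at *
      rw [h1, h2]
      simp }

namespace RNM

variable {Ω : Type} [MeasurableSpace Ω] {P : Measure Ω}

/-- the pointwise absolute value `L⁰(𝓕,ℂ) → L⁰(𝓕,ℝ)`. -/
noncomputable def L0abs (ξ : Ω →ₘ[P] ℂ) : Ω →ₘ[P] ℝ :=
  ξ.comp (fun z => ‖z‖) continuous_norm

/-- the canonical embedding `L⁰(𝓕,ℝ) → L⁰(𝓕,ℂ)`. -/
noncomputable def ofRealC (ξ : Ω →ₘ[P] ℝ) : Ω →ₘ[P] ℂ :=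
  ξ.comp Complex.ofReal Complex.continuous_ofReal

/-- pointwise complex conjugation on `L⁰(𝓕,ℂ)`. -/
noncomputable def conjC (ξ : Ω →ₘ[P] ℂ) : Ω →ₘ[P] ℂ :=
  ξ.comp (fun z => starRingEnd ℂ z) Complex.continuous_conj

/-- `ξ ∈ L⁰₊₊`, i.e. `ξ > 0` a.e. on `Ω`. -/
def L0pos (ξ : Ω →ₘ[P] ℝ) : Prop := ∀ᵐ ω ∂P, 0 < ξ ω

/-- `ξ < η` (a.e.) on the whole of `Ω`. -/
def ltAE (ξ η : Ω →ₘ[P] ℝ) : Prop := ∀ᵐ ω ∂P, ξ ω < η ω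

/-- the equivalence class `Ĩ_A ∈ L⁰(𝓕,ℂ)` of the indicator of a measurable set `A`. -/
noncomputable def indC (A : Set Ω) (hA : MeasurableSet A) : Ω →ₘ[P] ℂ :=
  AEEqFun.mk (A.indicator fun _ => (1 : ℂ)) (aestronglyMeasurable_const.indicator hA)

/-- the equivalence class `Ĩ_A ∈ L⁰(𝓕,ℝ)` of the indicator of a measurable set `A`. -/
noncomputable def indR (A : Set Ω) (hA : MeasurableSet A) : Ω →ₘ[P] ℝ :=
  AEEqFun.mk (A.indicator fun _ => (1 : ℝ)) (aestronglyMeasurable_const.indicator hA)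

section AELemmas

lemma L0abs_ae (ξ : Ω →ₘ[P] ℂ) : ∀ᵐ ω ∂P, (L0abs ξ) ω = ‖ξ ω‖ :=
  AEEqFun.coeFn_comp _ _ ξ

lemma le_ae {ξ η : Ω →ₘ[P] ℝ} (h : ξ ≤ η) : ∀ᵐ ω ∂P, ξ ω ≤ η ω :=
  AEEqFun.coeFn_le.2 h

lemma le_of_ae {ξ η : Ω →ₘ[P] ℝ} (h : ∀ᵐ ω ∂P, ξ ω ≤ η ω) : ξ ≤ η :=
  AEEqFun.coeFn_le.1 h

lemma mul_ae {γ : Type*} [TopologicalSpace γ] [CommRing γ] [IsTopologicalRing γ]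
    (ξ η : Ω →ₘ[P] γ) : ∀ᵐ ω ∂P, (ξ * η) ω = ξ ω * η ω :=
  AEEqFun.coeFn_mul ξ η

lemma add_ae {γ : Type*} [TopologicalSpace γ] [AddGroup γ] [IsTopologicalAddGroup γ]
    (ξ η : Ω →ₘ[P] γ) : ∀ᵐ ω ∂P, (ξ + η) ω = ξ ω + η ω :=
  AEEqFun.coeFn_add ξ η

lemma sub_ae {γ : Type*} [TopologicalSpace γ] [AddGroup γ] [IsTopologicalAddGroup γ]
    (ξ η : Ω →ₘ[P] γ) : ∀ᵐ ω ∂P, (ξ - η) ω = ξ ω - η ω :=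
  AEEqFun.coeFn_sub ξ η

lemma zero_ae (γ : Type*) [TopologicalSpace γ] [Zero γ] :
    ∀ᵐ ω ∂P, (0 : Ω →ₘ[P] γ) ω = 0 :=
  AEEqFun.coeFn_zero

lemma one_ae (γ : Type*) [TopologicalSpace γ] [One γ] :
    ∀ᵐ ω ∂P, (1 : Ω →ₘ[P] γ) ω = 1 :=
  AEEqFun.coeFn_one

end AELemmas

/-- a countable measurable partition of `Ω`. -/
structure IsMPartition (A : ℕ → Set Ω) : Prop where
  meas : ∀ n, MeasurableSet (A n)
  disj : Pairwise (Function.onFun Disjoint A)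
  cover : (⋃ n, A n) = Set.univ

section Module

variable {E : Type*} [AddCommGroup E] [Module (Ω →ₘ[P] ℂ) E]

variable (P E) in
/-- `E` has the countable concatenation property. -/
def HasCCP : Prop :=
  ∀ (A : ℕ → Set Ω) (hA : IsMPartition A) (x : ℕ → E),
    ∃ x0 : E, ∀ n, indC (P := P) (A n) (hA.meas n) • x0 = indC (P := P) (A n) (hA.meas n) • x n

/-- a subset `S` of `E` has the countable concatenation property. -/
def SetCCP (S : Set E) : Prop :=
  ∀ (A : ℕ → Set Ω) (hA : IsMPartition A) (x : ℕ → E), (∀ n, x n ∈ S) →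
    ∃ x0 ∈ S, ∀ n, indC (P := P) (A n) (hA.meas n) • x0 = indC (P := P) (A n) (hA.meas n) • x n

/-- the countable concatenation hull `H_cc(S)` of a subset `S` of `E`. -/
def Hcc (S : Set E) : Set E :=
  {x | ∃ (A : ℕ → Set Ω) (hA : IsMPartition A) (m : ℕ → E), (∀ n, m n ∈ S) ∧
    ∀ n, indC (P := P) (A n) (hA.meas n) • x = indC (P := P) (A n) (hA.meas n) • m n}

/-- `L⁰`-convexity of a subset of an `L⁰(𝓕,ℂ)`-module. -/
def L0Convex (S : Set E) : Prop :=
  ∀ x ∈ S, ∀ y ∈ S, ∀ ξ : Ω →ₘ[P] ℝ, 0 ≤ ξ → ξ ≤ 1 →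
    ofRealC ξ • x + ofRealC (1 - ξ) • y ∈ S

/-- the random-norm axioms for `nrm : E → L⁰₊`, making `(E, nrm)` an `RN` module over `ℂ`. -/
structure IsRNNorm (nrm : E → (Ω →ₘ[P] ℝ)) : Prop where
  nonneg : ∀ x, 0 ≤ nrm x
  eq_zero_iff : ∀ x, nrm x = 0 ↔ x = 0
  smul_eq : ∀ (ξ : Ω →ₘ[P] ℂ) (x : E), nrm (ξ • x) = L0abs ξ * nrm x
  add_le : ∀ x y, nrm (x + y) ≤ nrm x + nrm y

/-- the submodule of `P`-a.e. bounded random linear functionals on `(E, nrm)`: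
the random conjugate space `E*`. -/
noncomputable def rdual (nrm : E → (Ω →ₘ[P] ℝ)) :
    Submodule (Ω →ₘ[P] ℂ) (E →ₗ[Ω →ₘ[P] ℂ] (Ω →ₘ[P] ℂ)) where
  carrier := {f | ∃ ξ : Ω →ₘ[P] ℝ, 0 ≤ ξ ∧ ∀ x, L0abs (f x) ≤ ξ * nrm x}
  zero_mem' := by
    refine ⟨0, le_refl 0, fun x => ?_⟩
    apply le_of_ae
    have e0 : ((0 : E →ₗ[Ω →ₘ[P] ℂ] (Ω →ₘ[P] ℂ)) x) = (0 : Ω →ₘ[P] ℂ) := rfl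
    filter_upwards [L0abs_ae ((0 : E →ₗ[Ω →ₘ[P] ℂ] (Ω →ₘ[P] ℂ)) x),
      mul_ae (0 : Ω →ₘ[P] ℝ) (nrm x), zero_ae ℝ, zero_ae ℂ] with ω h1 h2 h3 h4
    rw [h1, h2, h3, e0, h4]
    simp
  add_mem' := by
    rintro f g ⟨ξ, hξ0, hξ⟩ ⟨η, hη0, hη⟩
    have hsum : (0 : Ω →ₘ[P] ℝ) ≤ ξ + η := by
      apply le_of_ae
      filter_upwards [le_ae hξ0, le_ae hη0, add_ae ξ η, zero_ae ℝ] with ω h1 h2 h3 h4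
      rw [h3, h4]
      rw [h4] at h1 h2
      linarith
    refine ⟨ξ + η, hsum, fun x => ?_⟩
    apply le_of_ae
    have e1 : ((f + g) x) = f x + g x := rfl
    filter_upwards [L0abs_ae ((f + g) x), add_ae (f x) (g x),
      mul_ae (ξ + η) (nrm x), add_ae ξ η, mul_ae ξ (nrm x), mul_ae η (nrm x),
      le_ae (hξ x), le_ae (hη x), L0abs_ae (f x), L0abs_ae (g x)]
      with ω h1 h2 h3 h4 h5 h6 h7 h8 h9 h10
    rw [h1, h3, h4, e1, h2]
    rw [h9, h5] at h7
    rw [h10, h6] at h8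
    calc ‖f x ω + g x ω‖ ≤ ‖f x ω‖ + ‖g x ω‖ :=
          norm_add_le _ _
      _ ≤ ξ ω * nrm x ω + η ω * nrm x ω := add_le_add h7 h8
      _ = (ξ ω + η ω) * nrm x ω := by ring
  smul_mem' := by
    rintro c f ⟨ξ, hξ0, hξ⟩
    have hpos : (0 : Ω →ₘ[P] ℝ) ≤ L0abs c * ξ := by
      apply le_of_ae
      filter_upwards [mul_ae (L0abs c) ξ, L0abs_ae c, le_ae hξ0, zero_ae ℝ]
        with ω h1 h2 h3 h4
      rw [h1, h2, h4]
      rw [h4] at h3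
      positivity
    refine ⟨L0abs c * ξ, hpos, fun x => ?_⟩
    apply le_of_ae
    have e1 : ((c • f) x) = c * f x := rfl
    filter_upwards [L0abs_ae ((c • f) x), mul_ae c (f x),
      mul_ae (L0abs c * ξ) (nrm x), mul_ae (L0abs c) ξ, L0abs_ae c,
      le_ae (hξ x), L0abs_ae (f x), mul_ae ξ (nrm x)] with ω h1 h2 h3 h4 h5 h6 h7 h8
    rw [h1, h3, h4, h5, e1, h2]
    rw [h7, h8] at h6
    have h0 : (0:ℝ) ≤ ‖c ω‖ := norm_nonneg _
    calc ‖c ω * f x ω‖ = ‖c ω‖ * ‖f x ω‖ := norm_mul _ _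
      _ ≤ ‖c ω‖ * (ξ ω * nrm x ω) := mul_le_mul_of_nonneg_left h6 h0
      _ = ‖c ω‖ * ξ ω * nrm x ω := by ring

/-- the conjugate random norm `‖f‖* = ⋁{|f(y)| : ‖y‖ ≤ 1}` (the lattice supremum, when
it exists). -/
noncomputable def dnorm (nrm : E → (Ω →ₘ[P] ℝ))
    (f : E →ₗ[Ω →ₘ[P] ℂ] (Ω →ₘ[P] ℂ)) : Ω →ₘ[P] ℝ := by
  classical
  exact if h : ∃ s : Ω →ₘ[P] ℝ, IsLUB {a | ∃ y : E, nrm y ≤ 1 ∧ a = L0abs (f y)} s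
    then h.choose else 0

/-- the random natural embedding of `E` into functionals on its random conjugate space. -/
noncomputable def Jmap (nrm : E → (Ω →ₘ[P] ℝ)) (x : E) :
    (↥(rdual nrm)) →ₗ[Ω →ₘ[P] ℂ] (Ω →ₘ[P] ℂ) where
  toFun f := f.1 x
  map_add' f g := rfl
  map_smul' c f := rfl

end Module

section Topologies

/-- a topology built from a directed family of "balls". -/
def ballTop {X ι : Type*} [Nonempty ι] (ball : X → ι → Set X)
    (dir : ∀ x i j, ∃ k, ball x k ⊆ ball x i ∩ ball x j) : TopologicalSpace X where
  IsOpen B := ∀ x ∈ B, ∃ i, ball x i ⊆ B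
  isOpen_univ := fun x _ => ⟨Classical.arbitrary ι, fun _ _ => trivial⟩
  isOpen_inter := fun B C hB hC x hx => by
    obtain ⟨i, hi⟩ := hB x hx.1
    obtain ⟨j, hj⟩ := hC x hx.2
    obtain ⟨k, hk⟩ := dir x i j
    exact ⟨k, fun y hy => ⟨hi (hk hy).1, hj (hk hy).2⟩⟩
  isOpen_sUnion := fun S hS x hx => by
    obtain ⟨B, hB, hxB⟩ := hx
    obtain ⟨i, hi⟩ := hS B hB x hxB
    exact ⟨i, fun y hy => ⟨B, hB, hi hy⟩⟩

instance L0posNonempty : Nonempty {ε : Ω →ₘ[P] ℝ // L0pos ε} := by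
  refine ⟨⟨1, ?_⟩⟩
  filter_upwards [one_ae (P := P) ℝ] with ω h
  rw [h]; exact one_pos

instance : Nonempty {e : ℝ // 0 < e} := ⟨⟨1, one_pos⟩⟩

instance : Nonempty {l : ℝ // 0 < l ∧ l < 1} := ⟨⟨1/2, by norm_num⟩⟩

lemma L0pos_inf {ε δ : Ω →ₘ[P] ℝ} (hε : L0pos ε) (hδ : L0pos δ) : L0pos (ε ⊓ δ) := by
  filter_upwards [hε, hδ, AEEqFun.coeFn_inf ε δ] with ω h1 h2 h3
  rw [h3]; exact lt_inf_iff.2 ⟨h1, h2⟩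

lemma ltAE_inf {a ε δ : Ω →ₘ[P] ℝ} (h : ltAE a (ε ⊓ δ)) : ltAE a ε ∧ ltAE a δ := by
  constructor
  · filter_upwards [h, AEEqFun.coeFn_inf ε δ] with ω h1 h2
    rw [h2] at h1; exact h1.trans_le inf_le_left
  · filter_upwards [h, AEEqFun.coeFn_inf ε δ] with ω h1 h2
    rw [h2] at h1; exact h1.trans_le inf_le_right

variable {E : Type*} [AddCommGroup E] [Module (Ω →ₘ[P] ℂ) E]

/-- the locally `L⁰`-convex topology `𝓣_c` on an `RN` module `(E, nrm)`. -/
noncomputable def TcTop (nrm : E → (Ω →ₘ[P] ℝ)) : TopologicalSpace E :=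
  ballTop (ι := {ε : Ω →ₘ[P] ℝ // L0pos ε})
    (fun x ε => {y | ltAE (nrm (y - x)) ε.1})
    (by
      rintro x ⟨ε, hε⟩ ⟨δ, hδ⟩
      exact ⟨⟨ε ⊓ δ, L0pos_inf hε hδ⟩, fun y hy => ⟨(ltAE_inf hy).1, (ltAE_inf hy).2⟩⟩)

/-- the `(ε,λ)`-topology `𝓣_{ε,λ}` on an `RN` module `(E, nrm)`. -/
noncomputable def TelTop (nrm : E → (Ω →ₘ[P] ℝ)) : TopologicalSpace E :=
  ballTop (ι := {e : ℝ // 0 < e} × {l : ℝ // 0 < l ∧ l < 1})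
    (fun x i => {y | ENNReal.ofReal (1 - i.2.1) < P {ω | nrm (y - x) ω < i.1.1}})
    (by
      rintro x ⟨⟨e₁, he₁⟩, ⟨l₁, hl₁⟩⟩ ⟨⟨e₂, he₂⟩, ⟨l₂, hl₂⟩⟩
      refine ⟨⟨⟨min e₁ e₂, lt_min he₁ he₂⟩,
        ⟨min l₁ l₂, lt_min hl₁.1 hl₂.1, lt_of_le_of_lt (min_le_left _ _) hl₁.2⟩⟩,
        fun y hy => ⟨?_, ?_⟩⟩ <;> simp only [Set.mem_setOf_eq] at hy ⊢
      · refine lt_of_le_of_lt (ENNReal.ofReal_le_ofReal (by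
          have := min_le_left l₁ l₂; linarith)) (hy.trans_le (measure_mono fun ω hω =>
          show nrm (y - x) ω < e₁ from lt_of_lt_of_le hω (min_le_left _ _)))
      · refine lt_of_le_of_lt (ENNReal.ofReal_le_ofReal (by
          have := min_le_right l₁ l₂; linarith)) (hy.trans_le (measure_mono fun ω hω =>
          show nrm (y - x) ω < e₂ from lt_of_lt_of_le hω (min_le_right _ _))))

variable (P) in
/-- the locally `L⁰`-convex weak star topology `σ_c` on the space of random linear
functionals on a module `M`, induced by the pairing with `M`. -/
noncomputable def sigmaCTop (M : Type*) [AddCommGroup M] [Module (Ω →ₘ[P] ℂ) M] :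
    TopologicalSpace (M →ₗ[Ω →ₘ[P] ℂ] (Ω →ₘ[P] ℂ)) :=
  ballTop (ι := Finset M × {ε : Ω →ₘ[P] ℝ // L0pos ε})
    (fun g i => {h | ∀ x ∈ i.1, ltAE (L0abs (h x - g x)) i.2.1})
    (by
      classical
      rintro g ⟨s, ε, hε⟩ ⟨t, δ, hδ⟩
      refine ⟨⟨s ∪ t, ⟨ε ⊓ δ, L0pos_inf hε hδ⟩⟩, fun h hh => ⟨?_, ?_⟩⟩
      · exact fun x hx => (ltAE_inf (hh x (Finset.mem_union_left t hx))).1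
      · exact fun x hx => (ltAE_inf (hh x (Finset.mem_union_right s hx))).2)

variable (P) in
/-- the `(ε,λ)` weak star topology `σ_{(ε,λ)}` on the space of random linear functionals
on a module `M`, induced by the pairing with `M`. -/
noncomputable def sigmaElTop (M : Type*) [AddCommGroup M] [Module (Ω →ₘ[P] ℂ) M] :
    TopologicalSpace (M →ₗ[Ω →ₘ[P] ℂ] (Ω →ₘ[P] ℂ)) :=
  ballTop (ι := Finset M × {e : ℝ // 0 < e} × {l : ℝ // 0 < l ∧ l < 1})
    (fun g i => {h | ∀ x ∈ i.1,
      ENNReal.ofReal (1 - i.2.2.1) < P {ω | (L0abs (h x - g x)) ω < i.2.1.1}})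
    (by
      classical
      rintro g ⟨s, ⟨e₁, he₁⟩, ⟨l₁, hl₁⟩⟩ ⟨t, ⟨e₂, he₂⟩, ⟨l₂, hl₂⟩⟩
      refine ⟨⟨s ∪ t, ⟨min e₁ e₂, lt_min he₁ he₂⟩,
        ⟨min l₁ l₂, lt_min hl₁.1 hl₂.1, lt_of_le_of_lt (min_le_left _ _) hl₁.2⟩⟩,
        fun h hh => ⟨fun x hx => ?_, fun x hx => ?_⟩⟩
      · refine lt_of_le_of_lt (ENNReal.ofReal_le_ofReal (by
          have := min_le_left l₁ l₂; linarith))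
          ((hh x (Finset.mem_union_left t hx)).trans_le (measure_mono fun ω hω =>
            show (L0abs (h x - g x)) ω < e₁ from lt_of_lt_of_le hω (min_le_left _ _)))
      · refine lt_of_le_of_lt (ENNReal.ofReal_le_ofReal (by
          have := min_le_right l₁ l₂; linarith))
          ((hh x (Finset.mem_union_right s hx)).trans_le (measure_mono fun ω hω =>
            show (L0abs (h x - g x)) ω < e₂ from lt_of_lt_of_le hω (min_le_right _ _))))

end Topologies

end RNM


/-!
Write `N = ‖g‖*` and `c = (1 + δ/2)⁻¹ < 1`. Each `y` in the unit ball gives the set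
`A ∩ {c N < |g y|}`; by exhaustion, countably many of these sets, for `y = u k`, contain all
the others up to null sets, and they then cover `A`, since otherwise `N` could be lowered to
`c N` on the rest of `A` and would not be the least upper bound. On the `k`-th disjointed piece
the rescaled vector `(N / g (u k)) • u k` has norm at most `1 / c = 1 + δ/2` and is sent to `N`
by `g`; the countable concatenation property glues these vectors, and `0` off `A`, into `x`.
-/

open MeasureTheory
open scoped ENNReal

namespace MeasureTheory

variable {α ι : Type*} [MeasurableSpace α] {μ : Measure α}

theorem exists_seq_ae_subset_iUnion [IsFiniteMeasure μ] [Nonempty ι] {B : ι → Set α}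
    (hB : ∀ i, MeasurableSet (B i)) : ∃ u : ℕ → ι, ∀ i, B i ≤ᵐ[μ] ⋃ n, B (u n) := by
  set f : (ℕ → ι) → ℝ≥0∞ := fun t => μ (⋃ n, B (t n))
  obtain ⟨a, -, ha, ha_mem⟩ :=
    exists_seq_tendsto_sSup (Set.range_nonempty f) (OrderTop.bddAbove _)
  choose t ht using ha_mem
  set u : ℕ → ι := fun k => t k.unpair.1 k.unpair.2
  have hu : ∀ m, f (t m) ≤ f u := fun m => measure_mono <| Set.iUnion_subset fun n =>
    Set.subset_iUnion_of_subset (Nat.pair m n) (by simp [u])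
  have hmax : ∀ v, f v ≤ f u := fun v =>
    (le_sSup (Set.mem_range_self v)).trans (le_of_tendsto' ha fun m => ht m ▸ hu m)
  refine ⟨u, fun i => ae_le_set.2 ?_⟩
  have hU : MeasurableSet (⋃ n, B (u n)) := .iUnion fun n => hB _
  have hle : μ (B i \ ⋃ n, B (u n)) + μ (⋃ n, B (u n)) ≤ 0 + μ (⋃ n, B (u n)) := by
    rw [← measure_union Set.disjoint_sdiff_left hU, Set.sdiff_union_self, zero_add]
    exact (congrArg μ (Set.union_iUnion_nat_succ fun n => B (Nat.casesOn n i u))).trans_le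
      (hmax _)
  exact nonpos_iff_eq_zero.1 (ENNReal.le_of_add_le_add_right (measure_ne_top _ _) hle)

end MeasureTheory

namespace RNM

variable {Ω : Type} [MeasurableSpace Ω] {P : Measure Ω}

lemma coeFn_indC (A : Set Ω) (hA : MeasurableSet A) :
    indC (P := P) A hA =ᵐ[P] A.indicator fun _ => 1 :=
  AEEqFun.coeFn_mk _ _

lemma coeFn_indR (A : Set Ω) (hA : MeasurableSet A) :
    indR (P := P) A hA =ᵐ[P] A.indicator fun _ => 1 :=
  AEEqFun.coeFn_mk _ _

lemma coeFn_ofRealC (ξ : Ω →ₘ[P] ℝ) : ofRealC ξ =ᵐ[P] fun ω => (ξ ω : ℂ) :=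
  AEEqFun.coeFn_comp _ _ ξ

def disjointedCover (B : ℕ → Set Ω) : ℕ → Set Ω
  | 0 => (⋃ k, B k)ᶜ
  | k + 1 => disjointed B k

lemma isMPartition_disjointedCover {B : ℕ → Set Ω} (hB : ∀ k, MeasurableSet (B k)) :
    IsMPartition (disjointedCover B) where
  meas
    | 0 => (MeasurableSet.iUnion hB).compl
    | k + 1 => .disjointed hB k
  disj
    | 0, 0, h => absurd rfl h
    | 0, j + 1, _ => disjoint_compl_left.mono_right
        ((disjointed_subset B j).trans (Set.subset_iUnion B j))
    | i + 1, 0, _ => (disjoint_compl_left.mono_right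
        ((disjointed_subset B i).trans (Set.subset_iUnion B i))).symm
    | i + 1, j + 1, h => disjoint_disjointed B fun hij => h (congrArg (· + 1) hij)
  cover := by
    rw [← Set.union_iUnion_nat_succ]
    simp only [disjointedCover, iUnion_disjointed, Set.compl_union_self]

lemma ne_zero_of_ae_pos_on {ξ : Ω →ₘ[P] ℝ} {A : Set Ω} (hPA : P A ≠ 0)
    (h : ∀ᵐ ω ∂P, ω ∈ A → 0 < ξ ω) : ξ ≠ 0 := by
  rintro rfl
  refine hPA (measure_eq_zero_iff_ae_notMem.2 ?_)
  filter_upwards [h, zero_ae ℝ] with ω hω h0 hA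
  exact (h0 ▸ hω hA).false

/-- Otherwise `N` could be lowered to `c N` on `D` and still bound `S`. -/
theorem ae_notMem_of_isLUB {S : Set (Ω →ₘ[P] ℝ)} {N : Ω →ₘ[P] ℝ} (hN : IsLUB S N)
    {D : Set Ω} (hD : MeasurableSet D) {c : ℝ} (hc : c < 1)
    (hpos : ∀ᵐ ω ∂P, ω ∈ D → 0 < N ω) (hS : ∀ a ∈ S, ∀ᵐ ω ∂P, ω ∈ D → a ω ≤ c * N ω) :
    ∀ᵐ ω ∂P, ω ∉ D := by
  classical
  set M : Ω →ₘ[P] ℝ := AEEqFun.mk (D.piecewise (fun ω => c * N ω) N)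
    ((N.stronglyMeasurable.const_mul c).piecewise hD N.stronglyMeasurable).aestronglyMeasurable
  have hM : M =ᵐ[P] D.piecewise (fun ω => c * N ω) N := AEEqFun.coeFn_mk _ _
  have hNM : N ≤ M := hN.2 fun a ha => le_of_ae <| by
    filter_upwards [hS a ha, le_ae (hN.1 ha), hM] with ω h1 h2 h3
    rw [h3]
    by_cases hω : ω ∈ D <;> simp [hω, h1, h2]
  filter_upwards [le_ae hNM, hM, hpos] with ω h1 h2 h3 hω
  rw [h2, Set.piecewise_eq_of_mem _ _ _ hω] at h1
  nlinarith [h3 hω]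

section Module

variable {E : Type*} [AddCommGroup E] [Module (Ω →ₘ[P] ℂ) E] {nrm : E → Ω →ₘ[P] ℝ}

lemma IsRNNorm.map_zero (hnrm : IsRNNorm nrm) : nrm 0 = 0 :=
  (hnrm.eq_zero_iff 0).2 rfl

lemma isLUB_dnorm {g : E →ₗ[Ω →ₘ[P] ℂ] (Ω →ₘ[P] ℂ)} (h : dnorm nrm g ≠ 0) :
    IsLUB {a | ∃ y : E, nrm y ≤ 1 ∧ a = L0abs (g y)} (dnorm nrm g) := by
  unfold dnorm at h ⊢
  split_ifs at h ⊢ with hex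
  · exact hex.choose_spec
  · exact absurd rfl h

variable (hnrm : IsRNNorm nrm) (g : E →ₗ[Ω →ₘ[P] ℂ] (Ω →ₘ[P] ℂ))
include hnrm

theorem exists_seq_ae_mul_lt_norm_apply [IsFiniteMeasure P] {N : Ω →ₘ[P] ℝ}
    (hN : IsLUB {a | ∃ y : E, nrm y ≤ 1 ∧ a = L0abs (g y)} N) {A : Set Ω}
    (hA : MeasurableSet A) (hpos : ∀ᵐ ω ∂P, ω ∈ A → 0 < N ω) {c : ℝ} (hc : c < 1) :
    ∃ u : ℕ → E, (∀ k, nrm (u k) ≤ 1) ∧ ∀ᵐ ω ∂P, ω ∈ A → ∃ k, c * N ω < ‖g (u k) ω‖ := by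
  set B : {y : E // nrm y ≤ 1} → Set Ω := fun y => A ∩ {ω | c * N ω < ‖g y.1 ω‖}
  have hB : ∀ y, MeasurableSet (B y) := fun y =>
    hA.inter (measurableSet_lt (N.measurable.const_mul c) (g y.1).measurable.norm)
  have : Nonempty {y : E // nrm y ≤ 1} := ⟨0, hnrm.map_zero ▸ le_of_ae (by
    filter_upwards [zero_ae ℝ, one_ae ℝ] with ω h0 h1
    rw [h0, h1]; exact zero_le_one)⟩
  obtain ⟨u, hu⟩ := exists_seq_ae_subset_iUnion (μ := P) hB
  have hS : ∀ a ∈ {a | ∃ y : E, nrm y ≤ 1 ∧ a = L0abs (g y)},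
      ∀ᵐ ω ∂P, ω ∈ A \ ⋃ k, B (u k) → a ω ≤ c * N ω := by
    rintro _ ⟨y, hy, rfl⟩
    filter_upwards [hu ⟨y, hy⟩, L0abs_ae (g y)] with ω hyU habs ⟨hωA, hωU⟩
    rw [habs]
    by_contra! hlt
    exact hωU (hyU ⟨hωA, hlt⟩)
  refine ⟨fun k => (u k).1, fun k => (u k).2, ?_⟩
  filter_upwards [ae_notMem_of_isLUB hN (hA.diff (.iUnion fun k => hB (u k))) hc
    (hpos.mono fun ω h hω => h hω.1) hS] with ω hω hωA
  simpa [B, hωA] using hω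

theorem exists_apply_eq_of_mul_lt_norm_apply {u : E} (hu : nrm u ≤ 1) (N : Ω →ₘ[P] ℝ)
    {c : ℝ} (hc : 0 < c) :
    ∃ v : E, ∀ᵐ ω ∂P, 0 ≤ N ω → c * N ω < ‖g u ω‖ → nrm v ω ≤ c⁻¹ ∧ g v ω = N ω := by
  set r : Ω →ₘ[P] ℂ := AEEqFun.mk (fun ω => (N ω : ℂ) / g u ω)
    ((Complex.measurable_ofReal.comp N.measurable).div (g u).measurable).aestronglyMeasurable
  refine ⟨r • u, ?_⟩
  rw [hnrm.smul_eq, LinearMap.map_smul, smul_eq_mul]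
  filter_upwards [(AEEqFun.coeFn_mk _ _ : r =ᵐ[P] _), mul_ae (L0abs r) (nrm u), L0abs_ae r,
    mul_ae r (g u), le_ae hu, one_ae ℝ] with ω hr hn hrabs hg hu1 h1 hN hlt
  rw [h1] at hu1
  have hgu : 0 < ‖g u ω‖ := (mul_nonneg hc.le hN).trans_lt hlt
  refine ⟨?_, ?_⟩
  · rw [hn, hrabs, hr, norm_div, Complex.norm_real, Real.norm_of_nonneg hN]
    calc N ω / ‖g u ω‖ * nrm u ω ≤ N ω / ‖g u ω‖ := by
          exact mul_le_of_le_one_right (by positivity) hu1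
      _ ≤ c⁻¹ := by
          rw [div_le_iff₀ hgu, ← div_eq_inv_mul, le_div_iff₀ hc, mul_comm]; exact hlt.le
  · rw [hg, hr, div_mul_cancel₀ _ (norm_pos_iff.1 hgu)]

theorem ae_eq_on_of_indC_smul_eq {D : Set Ω} (hD : MeasurableSet D) {x y : E}
    (h : indC (P := P) D hD • x = indC (P := P) D hD • y) :
    ∀ᵐ ω ∂P, ω ∈ D → nrm x ω = nrm y ω ∧ g x ω = g y ω := by
  have hn := congrArg nrm h
  have hg := congrArg g h
  rw [hnrm.smul_eq, hnrm.smul_eq] at hn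
  rw [LinearMap.map_smul, LinearMap.map_smul, smul_eq_mul, smul_eq_mul] at hg
  filter_upwards [mul_ae (L0abs (indC D hD)) (nrm x), mul_ae (L0abs (indC D hD)) (nrm y),
    mul_ae (indC D hD) (g x), mul_ae (indC D hD) (g y), L0abs_ae (indC D hD),
    coeFn_indC D hD] with ω hnx hny hgx hgy habs hind hω
  rw [hn, hny, habs, hind, Set.indicator_of_mem hω] at hnx
  rw [hg, hgy, hind, Set.indicator_of_mem hω] at hgx
  simpa using And.intro hnx.symm hgx.symm

theorem HasCCP.exists_glue (hccp : HasCCP P E) {B : ℕ → Set Ω} (hB : ∀ k, MeasurableSet (B k))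
    (v : ℕ → E) :
    ∃ x : E, ∀ᵐ ω ∂P, (ω ∉ ⋃ k, B k → nrm x ω = 0 ∧ g x ω = 0) ∧
      (ω ∈ ⋃ k, B k → ∃ k, ω ∈ B k ∧ nrm x ω = nrm (v k) ω ∧ g x ω = g (v k) ω) := by
  have hD := isMPartition_disjointedCover hB
  obtain ⟨x, hx⟩ := hccp _ hD fun n => Nat.casesOn n 0 v
  refine ⟨x, ?_⟩
  filter_upwards [ae_all_iff.2 fun n => ae_eq_on_of_indC_smul_eq hnrm g (hD.meas n) (hx n),
    zero_ae ℝ, zero_ae ℂ] with ω hω hn0 hg0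
  refine ⟨fun hout => ?_, fun hin => ?_⟩
  · rw [← hn0, ← hg0, ← hnrm.map_zero, ← map_zero g]
    exact hω 0 hout
  · rw [← iUnion_disjointed, Set.mem_iUnion] at hin
    obtain ⟨k, hk⟩ := hin
    exact ⟨k, disjointed_subset B k hk, hω (k + 1) hk⟩

theorem exists_eq_indC_mul_of_ae_cover (hccp : HasCCP P E) {A : Set Ω} (hA : MeasurableSet A)
    {N : Ω →ₘ[P] ℝ} (hN : ∀ᵐ ω ∂P, ω ∈ A → 0 ≤ N ω) {c : ℝ} (hc : 0 < c) {u : ℕ → E}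
    (hu : ∀ k, nrm (u k) ≤ 1) (hcover : ∀ᵐ ω ∂P, ω ∈ A → ∃ k, c * N ω < ‖g (u k) ω‖) :
    ∃ x : E, nrm x ≤ c⁻¹ • indR A hA ∧ g x = indC A hA * ofRealC N := by
  set B : ℕ → Set Ω := fun k => A ∩ {ω | c * N ω < ‖g (u k) ω‖}
  have hB : ∀ k, MeasurableSet (B k) := fun k =>
    hA.inter (measurableSet_lt (N.measurable.const_mul c) (g (u k)).measurable.norm)
  choose v hv using fun k => exists_apply_eq_of_mul_lt_norm_apply hnrm g (hu k) N hc
  obtain ⟨x, hx⟩ := hccp.exists_glue hnrm g hB v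
  have key : ∀ᵐ ω ∂P, nrm x ω ≤ c⁻¹ * A.indicator (fun _ => 1) ω ∧
      g x ω = A.indicator (fun _ => 1) ω * N ω := by
    filter_upwards [hx, ae_all_iff.2 hv, hN, hcover] with ω ⟨hout, hin⟩ hvω hNω hcovω
    by_cases hω : ω ∈ ⋃ k, B k
    · obtain ⟨k, ⟨hωA, hlt⟩, hn, hg⟩ := hin hω
      simpa [hn, hg, hωA] using hvω k (hNω hωA) hlt
    · have hωA : ω ∉ A := fun hωA => hω <| by
        obtain ⟨k, hk⟩ := hcovω hωA
        exact Set.mem_iUnion.2 ⟨k, hωA, hk⟩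
      simp [hout hω, hωA]
  refine ⟨x, le_of_ae ?_, AEEqFun.ext ?_⟩
  · filter_upwards [key, AEEqFun.coeFn_smul c⁻¹ (indR A hA), coeFn_indR A hA]
      with ω hω hsmul hind
    rw [hsmul, Pi.smul_apply, hind, smul_eq_mul]
    exact hω.1
  · filter_upwards [key, mul_ae (indC A hA) (ofRealC N), coeFn_indC A hA, coeFn_ofRealC N]
      with ω hω hmul hind hreal
    rw [hmul, hind, hreal, hω.2]

end Module

end RNM

open MeasureTheory RNM in
theorem attainment_on_stratum_general {Ω : Type} [MeasurableSpace Ω] {P : Measure Ω}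
    [IsProbabilityMeasure P] {E : Type*} [AddCommGroup E] [Module (Ω →ₘ[P] ℂ) E]
    (nrm : E → Ω →ₘ[P] ℝ) (hnrm : IsRNNorm nrm) (hccp : HasCCP P E)
    (g : E →ₗ[Ω →ₘ[P] ℂ] (Ω →ₘ[P] ℂ))
    (A : Set Ω) (hA : MeasurableSet A) (hPA : 0 < P A) (δ : ℝ) (hδ : 0 < δ)
    (hbig : ∀ᵐ ω ∂P, ω ∈ A → 1 + δ < (dnorm nrm g) ω) :
    ∃ x : E, nrm x ≤ (1 + δ / 2) • indR A hA ∧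
      g x = indC A hA * ofRealC (dnorm nrm g) := by
  have hpos : ∀ᵐ ω ∂P, ω ∈ A → 0 < dnorm nrm g ω := hbig.mono fun ω h hω => by linarith [h hω]
  have hN := isLUB_dnorm (ne_zero_of_ae_pos_on hPA.ne' hpos)
  have hc : 0 < (1 + δ / 2)⁻¹ := by positivity
  have hc1 : (1 + δ / 2)⁻¹ < 1 := inv_lt_one_of_one_lt₀ (by linarith)
  obtain ⟨u, hu, hcover⟩ := exists_seq_ae_mul_lt_norm_apply hnrm g hN hA hpos hc1
  simpa only [inv_inv] using exists_eq_indC_mul_of_ae_cover hnrm g hccp hA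
    (hpos.mono fun ω h hω => (h hω).le) hc hu hcover

open MeasureTheory RNM in
/-- The key step (via the Helly theorem) in the proof of Lemma 4.1: if `E` has the
countable concatenation property, `g ∈ E*`, and `‖g‖* > 1 + δ` a.e. on a set `A` of
positive measure, then there is `x ∈ E` with `‖x‖ ≤ (1 + δ/2) Ĩ_A` and
`g(x) = Ĩ_A ‖g‖*`. -/
theorem attainment_on_stratum {Ω : Type} [MeasurableSpace Ω] {P : Measure Ω}
    [IsProbabilityMeasure P] {E : Type*} [AddCommGroup E] [Module (Ω →ₘ[P] ℂ) E]
    (nrm : E → Ω →ₘ[P] ℝ) (hnrm : IsRNNorm nrm) (hccp : HasCCP P E)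
    (g : E →ₗ[Ω →ₘ[P] ℂ] (Ω →ₘ[P] ℂ)) (hg : g ∈ rdual nrm)
    (A : Set Ω) (hA : MeasurableSet A) (hPA : 0 < P A) (δ : ℝ) (hδ : 0 < δ)
    (hbig : ∀ᵐ ω ∂P, ω ∈ A → 1 + δ < (dnorm nrm g) ω) :
    ∃ x : E, nrm x ≤ (1 + δ / 2) • indR A hA ∧
      g x = indC A hA * ofRealC (dnorm nrm g) :=
  attainment_on_stratum_general nrm hnrm hccp g A hA hPA δ hδ hbig
end

section
/- Let (E,‖·‖) be a random normed module over ℂ and E_cc its countable concatenation hull with the extended random norm. Then J(E) is dense in J(E_cc) ⊆ E** with respect to the (ε,λ)-topology 𝓣_{ε,λ} on E**; moreover, since 𝓣_{ε,λ} is stronger than σ_{(ε,λ)}(E**,E*), J(E) is σ_{(ε,λ)}(E**,E*)-dense in J(E_cc). -/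
open MeasureTheory

/-! An `x` in the countable concatenation hull `H_cc(S)`, say `Ĩ_{Aₙ} x = Ĩ_{Aₙ} mₙ` with
`mₙ ∈ S`, agrees with the partial concatenation `y = ∑_{n ≤ N} Ĩ_{Aₙ} mₙ ∈ S` on
`B = A₀ ∪ ⋯ ∪ A_N`, and `P B → 1`. Hence every evaluation of `J y - J x` at `f ∈ E*`
vanishes on `B`, and so does the conjugate norm of `J y - J x`; this puts `J y` in any given
`𝓣_{ε,λ}`- or `σ_{(ε,λ)}`-neighbourhood of `J x` once `P B > 1 - λ`. -/

open scoped Topology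

namespace RNM

variable {Ω : Type} [MeasurableSpace Ω] {P : Measure Ω}

lemma indC_ae (A : Set Ω) (hA : MeasurableSet A) :
    ∀ᵐ ω ∂P, (indC (P := P) A hA) ω = A.indicator (fun _ => (1 : ℂ)) ω :=
  AEEqFun.coeFn_mk _ _

lemma indR_ae (A : Set Ω) (hA : MeasurableSet A) :
    ∀ᵐ ω ∂P, (indR (P := P) A hA) ω = A.indicator (fun _ => (1 : ℝ)) ω :=
  AEEqFun.coeFn_mk _ _

lemma sum_ae {ι γ : Type*} [TopologicalSpace γ] [AddCommGroup γ] [IsTopologicalAddGroup γ]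
    (s : Finset ι) (f : ι → Ω →ₘ[P] γ) :
    ∀ᵐ ω ∂P, (∑ i ∈ s, f i) ω = ∑ i ∈ s, (f i) ω := by
  classical
  induction s using Finset.induction with
  | empty => simpa using zero_ae (P := P) γ
  | insert a s ha ih =>
    filter_upwards [add_ae (f a) (∑ i ∈ s, f i), ih] with ω h1 h2
    rw [Finset.sum_insert ha, h1, h2, Finset.sum_insert ha]

lemma indC_mul_self (A : Set Ω) (hA : MeasurableSet A) :
    indC (P := P) A hA * indC A hA = indC A hA := by
  apply AEEqFun.ext
  filter_upwards [mul_ae (indC (P := P) A hA) (indC A hA), indC_ae (P := P) A hA]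
    with ω h1 h2
  rw [h1, h2]
  by_cases h : ω ∈ A <;> simp [h]

lemma indC_mul_of_disjoint {A B : Set Ω} (hA : MeasurableSet A) (hB : MeasurableSet B)
    (hd : Disjoint A B) : indC (P := P) A hA * indC B hB = 0 := by
  apply AEEqFun.ext
  filter_upwards [mul_ae (indC (P := P) A hA) (indC B hB), indC_ae (P := P) A hA,
    indC_ae (P := P) B hB, zero_ae (P := P) ℂ] with ω h1 h2 h3 h4
  rw [h1, h2, h3, h4]
  by_cases h : ω ∈ A
  · simp [Set.disjoint_left.1 hd h]
  · simp [h]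

lemma indC_biUnion {ι : Type*} {A : ι → Set Ω} (hm : ∀ n, MeasurableSet (A n))
    (hd : Pairwise (Function.onFun Disjoint A)) (s : Finset ι) :
    indC (P := P) (⋃ n ∈ s, A n) (s.measurableSet_biUnion fun n _ => hm n) =
      ∑ n ∈ s, indC (A n) (hm n) := by
  apply AEEqFun.ext
  filter_upwards [indC_ae (P := P) _ (s.measurableSet_biUnion fun n _ => hm n),
    sum_ae s fun n => indC (P := P) (A n) (hm n),
    (Filter.eventually_all_finset s).2 fun n _ => indC_ae (P := P) (A n) (hm n)]
    with ω h1 h2 h3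
  rw [h1, h2, Finset.indicator_biUnion_apply s A (fun i _ j _ hij => hd hij) ω]
  exact (Finset.sum_congr rfl h3).symm

lemma ae_eq_zero_on_of_indC_mul_eq_zero {B : Set Ω} (hB : MeasurableSet B)
    {ξ : Ω →ₘ[P] ℂ} (h : indC B hB * ξ = 0) : ∀ᵐ ω ∂P, ω ∈ B → ξ ω = 0 := by
  filter_upwards [mul_ae (indC B hB) ξ, indC_ae (P := P) B hB, zero_ae (P := P) ℂ]
    with ω h1 h2 h3 hω
  have e : (indC (P := P) B hB * ξ) ω = (0 : Ω →ₘ[P] ℂ) ω := by rw [h]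
  rwa [h1, h2, h3, Set.indicator_of_mem hω, one_mul] at e

section Module

variable {E : Type*} [AddCommGroup E] [Module (Ω →ₘ[P] ℂ) E]

lemma indC_smul_sum_indC_smul {ι : Type*} {A : ι → Set Ω} (hm : ∀ n, MeasurableSet (A n))
    (hd : Pairwise (Function.onFun Disjoint A)) (x : ι → E) {s : Finset ι} {n : ι}
    (hn : n ∈ s) :
    indC (P := P) (A n) (hm n) • ∑ k ∈ s, indC (P := P) (A k) (hm k) • x k =
      indC (P := P) (A n) (hm n) • x n := by
  rw [Finset.smul_sum, Finset.sum_eq_single_of_mem n hn, smul_smul, indC_mul_self]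
  intro k _ hkn
  rw [smul_smul, indC_mul_of_disjoint _ _ (hd hkn.symm)]
  exact zero_smul (Ω →ₘ[P] ℂ) (x k)

lemma exists_mem_indC_smul_sub_eq_zero_of_mem_Hcc (S : Submodule (Ω →ₘ[P] ℂ) E) {x : E}
    (hx : x ∈ Hcc (P := P) (S : Set E)) {c : ENNReal} (hc : c < P Set.univ) :
    ∃ y ∈ S, ∃ (B : Set Ω) (hB : MeasurableSet B),
      c < P B ∧ indC (P := P) B hB • (y - x) = 0 := by
  obtain ⟨A, hA, m, hmS, hxm⟩ := hx
  have hlim : Filter.Tendsto (fun N => P (Set.accumulate A N)) Filter.atTop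
      (𝓝 (P Set.univ)) := by
    rw [← hA.cover]
    exact tendsto_measure_iUnion_accumulate
  obtain ⟨N, hN⟩ := (hlim.eventually_const_lt hc).exists
  have hB : MeasurableSet (⋃ n ∈ Finset.Iic N, A n) :=
    (Finset.Iic N).measurableSet_biUnion fun n _ => hA.meas n
  refine ⟨∑ n ∈ Finset.Iic N, indC (P := P) (A n) (hA.meas n) • m n,
    S.sum_mem fun n _ => S.smul_mem _ (hmS n), _, hB, ?_, ?_⟩
  · convert hN using 2
    ext ω
    simp [Set.accumulate_def]
  · rw [indC_biUnion hA.meas hA.disj, Finset.sum_smul]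
    refine Finset.sum_eq_zero fun n hn => ?_
    rw [smul_sub, indC_smul_sum_indC_smul hA.meas hA.disj m hn, hxm n, sub_self]

/-- The least upper bound `s` of the `|g y|` is dominated by the upper bound `Ĩ_{Bᶜ} s`. -/
lemma dnorm_ae_nonpos_on (nrm : E → Ω →ₘ[P] ℝ) (g : E →ₗ[Ω →ₘ[P] ℂ] (Ω →ₘ[P] ℂ))
    {B : Set Ω} (hB : MeasurableSet B) (hg : ∀ y, indC B hB * g y = 0) :
    ∀ᵐ ω ∂P, ω ∈ B → dnorm nrm g ω ≤ 0 := by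
  unfold dnorm
  split_ifs with h
  · have hs := h.choose_spec
    have hub : h.choose ≤ indR Bᶜ hB.compl * h.choose := by
      refine hs.2 ?_
      rintro _ ⟨y, hy, rfl⟩
      apply le_of_ae
      filter_upwards [L0abs_ae (g y), mul_ae (indR Bᶜ hB.compl) h.choose,
        indR_ae (P := P) Bᶜ hB.compl, le_ae (hs.1 ⟨y, hy, rfl⟩),
        ae_eq_zero_on_of_indC_mul_eq_zero hB (hg y)] with ω h1 h2 h3 h4 h5
      rw [h1] at h4 ⊢
      rw [h2, h3]
      by_cases hω : ω ∈ B
      · simp [hω, h5 hω]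
      · simpa [hω] using h4
    filter_upwards [le_ae hub, mul_ae (indR Bᶜ hB.compl) h.choose,
      indR_ae (P := P) Bᶜ hB.compl] with ω h1 h2 h3 hω
    simpa [h2, h3, hω] using h1
  · filter_upwards [zero_ae (P := P) ℝ] with ω h _
    rw [h]

end Module

lemma mem_closure_TelTop {E : Type*} [AddCommGroup E] (nrm : E → Ω →ₘ[P] ℝ)
    {T : Set E} {x : E}
    (h : ∀ c < 1, ∃ y ∈ T, ∃ B : Set Ω, c < P B ∧ ∀ᵐ ω ∂P, ω ∈ B → nrm (y - x) ω ≤ 0) :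
    x ∈ closure[TelTop nrm] T := by
  let := TelTop nrm
  rw [mem_closure_iff]
  rintro U hU hxU
  obtain ⟨⟨⟨e, he⟩, ⟨l, hl⟩⟩, hball⟩ := hU x hxU
  obtain ⟨y, hyT, B, hPB, hy⟩ :=
    h (ENNReal.ofReal (1 - l)) (ENNReal.ofReal_lt_one.2 (by linarith))
  refine ⟨y, hball (hPB.trans_le (measure_mono_ae ?_)), hyT⟩
  filter_upwards [hy] with ω hω hωB
  exact (hω hωB).trans_lt he

lemma mem_closure_sigmaElTop {M : Type*} [AddCommGroup M] [Module (Ω →ₘ[P] ℂ) M]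
    {T : Set (M →ₗ[Ω →ₘ[P] ℂ] (Ω →ₘ[P] ℂ))} {g : M →ₗ[Ω →ₘ[P] ℂ] (Ω →ₘ[P] ℂ)}
    (h : ∀ c < 1, ∃ f ∈ T, ∃ B : Set Ω, c < P B ∧ ∀ x, ∀ᵐ ω ∂P, ω ∈ B → (f x - g x) ω = 0) :
    g ∈ closure[sigmaElTop P M] T := by
  let := sigmaElTop P M
  rw [mem_closure_iff]
  rintro U hU hgU
  obtain ⟨⟨s, ⟨e, he⟩, ⟨l, hl⟩⟩, hball⟩ := hU g hgU
  obtain ⟨f, hfT, B, hPB, hf⟩ :=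
    h (ENNReal.ofReal (1 - l)) (ENNReal.ofReal_lt_one.2 (by linarith))
  refine ⟨f, hball fun x _ => hPB.trans_le (measure_mono_ae ?_), hfT⟩
  filter_upwards [hf x, L0abs_ae (f x - g x)] with ω hω habs hωB
  show L0abs (f x - g x) ω < e
  rwa [habs, hω hωB, norm_zero]

end RNM

open MeasureTheory RNM in
theorem J_image_dense_in_hull_image_general {Ω : Type} [MeasurableSpace Ω] {P : Measure Ω}
    [IsProbabilityMeasure P] {F : Type*} [AddCommGroup F] [Module (Ω →ₘ[P] ℂ) F]
    (nrm : F → Ω →ₘ[P] ℝ)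
    (S : Submodule (Ω →ₘ[P] ℂ) F) (hHull : Hcc (P := P) (S : Set F) = Set.univ) :
    Set.range (Jmap nrm) ⊆
      @closure _ (TelTop (dnorm (fun f : ↥(rdual nrm) => dnorm nrm f.1)))
        (Jmap nrm '' (S : Set F)) ∧
    Set.range (Jmap nrm) ⊆
      @closure _ (sigmaElTop P ↥(rdual nrm)) (Jmap nrm '' (S : Set F)) := by
  have approx : ∀ x : F, ∀ c < 1, ∃ y ∈ S, ∃ (B : Set Ω) (hB : MeasurableSet B), c < P B ∧
      ∀ f : rdual nrm, indC B hB * (Jmap nrm y - Jmap nrm x) f = 0 := by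
    intro x c hc
    obtain ⟨y, hyS, B, hB, hPB, hyx⟩ := exists_mem_indC_smul_sub_eq_zero_of_mem_Hcc S
      (hHull ▸ Set.mem_univ x) (hc.trans_eq measure_univ.symm)
    refine ⟨y, hyS, B, hB, hPB, fun f => ?_⟩
    change indC B hB * (f.1 y - f.1 x) = 0
    rw [← map_sub, ← smul_eq_mul, ← map_smul, hyx, map_zero]
  constructor
  · rintro _ ⟨x, rfl⟩
    refine mem_closure_TelTop _ fun c hc => ?_
    obtain ⟨y, hyS, B, hB, hPB, hvan⟩ := approx x c hc
    exact ⟨_, ⟨y, hyS, rfl⟩, B, hPB, dnorm_ae_nonpos_on _ _ hB hvan⟩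
  · rintro _ ⟨x, rfl⟩
    refine mem_closure_sigmaElTop fun c hc => ?_
    obtain ⟨y, hyS, B, hB, hPB, hvan⟩ := approx x c hc
    exact ⟨_, ⟨y, hyS, rfl⟩, B, hPB, fun f => ae_eq_zero_on_of_indC_mul_eq_zero hB (hvan f)⟩

open MeasureTheory RNM in
/-- If `F` is the countable concatenation hull of its submodule `S` (every element of `F`
is a concatenation of elements of `S`), then `J(S)` is dense in `J(F)` inside `F**` for
the `(ε,λ)`-topology `𝓣_{ε,λ}` on `F**`, hence also for the (coarser) `(ε,λ)` weak star
topology `σ_{(ε,λ)}(F**,F*)`. -/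
theorem J_image_dense_in_hull_image {Ω : Type} [MeasurableSpace Ω] {P : Measure Ω}
    [IsProbabilityMeasure P] {F : Type*} [AddCommGroup F] [Module (Ω →ₘ[P] ℂ) F]
    (nrm : F → Ω →ₘ[P] ℝ) (hnrm : IsRNNorm nrm)
    (S : Submodule (Ω →ₘ[P] ℂ) F) (hHull : Hcc (P := P) (S : Set F) = Set.univ) :
    Set.range (Jmap nrm) ⊆
      @closure _ (TelTop (dnorm (fun f : ↥(rdual nrm) => dnorm nrm f.1)))
        (Jmap nrm '' (S : Set F)) ∧
    Set.range (Jmap nrm) ⊆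
      @closure _ (sigmaElTop P ↥(rdual nrm)) (Jmap nrm '' (S : Set F)) :=
  J_image_dense_in_hull_image_general nrm S hHull
end
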